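/- arXiv:2508.10756 — 5 statements merged into one kernel-verified Lean document; each statement's English description precedes it below -/
import Mathlib

section
/- Let n ≥ 1 and let H be a subgroup of the dihedral group D_{2n}. If (D_{2n}, H) is a strong Gelfand pair, then H is one of: (i) a reflection subgroup ⟨ba^i⟩ for some i; (ii) a dihedral subgroup of D_{2n}; (iii) the maximal cyclic subgroup ⟨a⟩; or (iv), in case n is even, the index-four cyclic subgroup ⟨a²⟩. -/
/-! A subgroup `H ≤ D_{2n}` without reflections consists of the rotations `r i`, `i ∈ S`. If
`2 ∉ S`, then, since characters of the finite group `ZMod n ⧸ S` separate points, some character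
`χ` of `ZMod n` is trivial on `S` with `χ 2 ≠ 1`. The representation `r i ↦ diag (χ i) (χ (-i))`,
`sr i ↦ antidiag (χ (-i)) (χ i)` of `D_{2n}` is then irreducible but trivial on `H`, so its
restriction to `H` contains the trivial representation twice and `(D_{2n}, H)` is not a strong
Gelfand pair. Hence `2 ∈ S`, which leaves `S = ZMod n` and, for even `n`, `S = ⟨2⟩`. -/

open CategoryTheory

/-- `(G, H)` is a strong Gelfand pair: the restriction to `H` of every irreducible
complex representation of `G` is multiplicity-free, i.e. every irreducible
complex representation of `H` occurs in it with multiplicity at most one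
(equivalently, by Frobenius reciprocity, every irreducible character of `H`
induces to a multiplicity-free character of `G`). -/
def IsStrongGelfandPair (G : Type) [Group G] (H : Subgroup G) : Prop :=
  ∀ (V : FDRep ℂ G) (W : FDRep ℂ H), Simple V → Simple W →
    Module.finrank ℂ (W ⟶ (Action.res (FGModuleCat ℂ) H.subtype).obj V) ≤ 1

instance Subrepresentation.nontrivial {k G V : Type*} [Semiring k] [Monoid G] [AddCommMonoid V]
    [Module k V] [Nontrivial V] {ρ : Representation k G V} :
    Nontrivial (Subrepresentation ρ) :=
  ⟨⊥, ⊤, fun h => bot_ne_top (congrArg Subrepresentation.toSubmodule h)⟩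

theorem Representation.IsIrreducible.nontrivial {k G V : Type*} [Field k] [Monoid G]
    [AddCommGroup V] [Module k V] (ρ : Representation k G V) [ρ.IsIrreducible] :
    Nontrivial V := by
  by_contra hV
  rw [not_nontrivial_iff_subsingleton] at hV
  exact bot_ne_top (α := Subrepresentation ρ) (Subrepresentation.ext (Subsingleton.elim _ _))

instance Representation.isIrreducible_trivial {k G : Type*} [Field k] [Monoid G] :
    (Representation.trivial k G k).IsIrreducible where
  eq_bot_or_eq_top p := (eq_bot_or_eq_top p.toSubmodule).imp
    (fun h => Subrepresentation.toSubmodule_injective h)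
    (fun h => Subrepresentation.toSubmodule_injective h)

namespace FDRep

variable {k G : Type u} [Field k] [Group G]

theorem simple_of_isIrreducible {V : Type u} [AddCommGroup V] [Module k V] [FiniteDimensional k V]
    (ρ : Representation k G V) [ρ.IsIrreducible] : Simple (FDRep.of ρ) := by
  have := Representation.IsIrreducible.nontrivial ρ
  refine ⟨fun {Y} f _ => ⟨fun hiso hf => ?_, fun hf => ?_⟩⟩
  · obtain ⟨v, hv⟩ := exists_ne (0 : V)
    obtain ⟨g, _, hg⟩ := hiso.out
    refine hv ?_
    calc v = (g ≫ f).hom v := by rw [hg]; rfl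
      _ = f.hom (g.hom v) := rfl
      _ = 0 := by rw [hf]; rfl
  · have hinj : Function.Injective f.hom := by
      have hmono : Mono ((Action.forget (FGModuleCat k) (MonCat.of G) ⋙
        forget₂ (FGModuleCat k) (ModuleCat k)).map f) := inferInstance
      rwa [ModuleCat.mono_iff_injective] at hmono
    let p : Subrepresentation ρ :=
      ⟨LinearMap.range (ConcreteCategory.hom f.hom : Y →ₗ[k] V), by
        rintro g _ ⟨y, rfl⟩
        exact ⟨Y.ρ g y, ConcreteCategory.congr_hom (f.comm g) y⟩⟩
    rcases eq_bot_or_eq_top p with h | h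
    · refine absurd (Action.Hom.ext ?_) hf
      ext y
      exact congrArg (· y) (LinearMap.range_eq_bot.mp (congrArg Subrepresentation.toSubmodule h))
    · have hsurj : Function.Surjective f.hom :=
        LinearMap.range_eq_top.mp (congrArg Subrepresentation.toSubmodule h)
      have : IsIso f.hom := (ConcreteCategory.isIso_iff_bijective f.hom).mpr ⟨hinj, hsurj⟩
      exact Action.isIso_of_hom_isIso f

theorem finrank_hom_trivial_res_of_le_ker {H : Subgroup G} (V : FDRep k G) (hV : H ≤ V.ρ.ker) :
    Module.finrank k (FDRep.of (Representation.trivial k H k) ⟶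
      (Action.res (FGModuleCat k) H.subtype).obj V) = Module.finrank k V := by
  let e : (FDRep.of (Representation.trivial k H k) ⟶
      (Action.res (FGModuleCat k) H.subtype).obj V) ≃ₗ[k] (k →ₗ[k] V) :=
    { toFun f := ConcreteCategory.hom f.hom
      map_add' _ _ := rfl
      map_smul' _ _ := rfl
      invFun l :=
        { hom := ConcreteCategory.ofHom l
          comm h := by
            apply ConcreteCategory.hom_ext
            intro x
            change l x = V.ρ h (l x)
            rw [MonoidHom.mem_ker.mp (hV h.2)]
            rfl }
      left_inv _ := rfl
      right_inv _ := rfl }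
  rw [e.finrank_eq, (LinearMap.ringLmapEquivSelf k k V).finrank_eq]

end FDRep

theorem IsStrongGelfandPair.finrank_le_one_of_le_ker {G : Type} [Group G] {H : Subgroup G}
    (hH : IsStrongGelfandPair G H) (V : FDRep ℂ G) [Simple V] (hV : H ≤ V.ρ.ker) :
    Module.finrank ℂ V ≤ 1 :=
  FDRep.finrank_hom_trivial_res_of_le_ker V hV ▸
    hH V _ inferInstance (FDRep.simple_of_isIrreducible _)

theorem AddChar.exists_ne_one_of_notMem {A : Type*} [AddCommGroup A] [Finite A]
    {S : AddSubgroup A} {a : A} (ha : a ∉ S) :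
    ∃ χ : AddChar A ℂ, (∀ s ∈ S, χ s = 1) ∧ χ a ≠ 1 := by
  obtain ⟨ψ, hψ⟩ := AddChar.exists_apply_ne_zero.mpr
    ((QuotientAddGroup.eq_zero_iff a).not.mpr ha)
  refine ⟨ψ.compAddMonoidHom (QuotientAddGroup.mk' S), fun s hs => ?_, hψ⟩
  simp [(QuotientAddGroup.eq_zero_iff s).mpr hs]

theorem ZMod.eq_zmultiples_one_or_two {n : ℕ} {S : AddSubgroup (ZMod n)}
    (h2 : (2 : ZMod n) ∈ S) :
    S = AddSubgroup.zmultiples 1 ∨ (Even n ∧ S = AddSubgroup.zmultiples 2) := by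
  by_cases h1 : (1 : ZMod n) ∈ S
  · refine Or.inl (le_antisymm (fun j _ => ?_) (AddSubgroup.zmultiples_le.mpr h1))
    rw [← ZMod.intCast_zmod_cast j]
    exact AddSubgroup.intCast_mem_zmultiples_one _
  have heven : ∀ m : ℤ, (m : ZMod n) ∈ S → Even m := by
    intro m hm
    by_contra hodd
    obtain ⟨q, rfl⟩ := Int.not_even_iff_odd.mp hodd
    refine h1 ?_
    have : (1 : ZMod n) = ((2 * q + 1 : ℤ) : ZMod n) - q • (2 : ZMod n) := by push_cast; ring
    rw [this]
    exact S.sub_mem hm (S.zsmul_mem h2 q)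
  refine Or.inr ⟨?_, le_antisymm (fun j hj => ?_) (AddSubgroup.zmultiples_le.mpr h2)⟩
  · exact_mod_cast heven n (by simp)
  · rw [← ZMod.intCast_zmod_cast j] at hj ⊢
    obtain ⟨q, hq⟩ := heven _ hj
    exact ⟨q, by rw [hq]; push_cast; ring⟩

namespace DihedralGroup

variable {n : ℕ}

section repOfAddChar

variable {k : Type*} [CommRing k] (χ : AddChar (ZMod n) k)

def repOfAddChar : Representation k (DihedralGroup n) (k × k) where
  toFun
    | r i => LinearMap.prodMap (χ i • LinearMap.id) (χ (-i) • LinearMap.id)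
    | sr i => LinearMap.prodMap (χ (-i) • LinearMap.id) (χ i • LinearMap.id) ∘ₗ
        (LinearEquiv.prodComm k k k).toLinearMap
  map_one' := by rw [one_def]; ext <;> simp
  map_mul' := by
    rintro (i | i) (j | j) <;> ext <;> simp [AddChar.map_add_eq_mul, sub_eq_add_neg] <;> ring

@[simp] lemma repOfAddChar_r (i : ZMod n) (v : k × k) :
    repOfAddChar χ (r i) v = (χ i * v.1, χ (-i) * v.2) := rfl

@[simp] lemma repOfAddChar_sr (i : ZMod n) (v : k × k) :
    repOfAddChar χ (sr i) v = (χ (-i) * v.2, χ i * v.1) := rfl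

end repOfAddChar

lemma isIrreducible_repOfAddChar {k : Type*} [Field k] (χ : AddChar (ZMod n) k) (hχ : χ 2 ≠ 1) :
    (repOfAddChar χ).IsIrreducible where
  eq_bot_or_eq_top p := by
    refine or_iff_not_imp_left.mpr fun hp => Subrepresentation.toSubmodule_injective
      (?_ : p.toSubmodule = ⊤)
    set P := p.toSubmodule
    -- `r 1` has the distinct eigenvalues `χ 1` and `χ (-1)` on the two coordinate axes.
    have hne : χ 1 - χ (-1) ≠ 0 := by
      refine sub_ne_zero.mpr fun h => hχ ?_
      rw [← one_add_one_eq_two, AddChar.map_add_eq_mul]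
      nth_rw 1 [h]
      rw [← AddChar.map_add_eq_mul, neg_add_cancel, AddChar.map_zero_eq_one]
    have hfst : ∀ v ∈ P, (v.1, (0 : k)) ∈ P := by
      intro v hv
      have : (v.1, (0 : k)) = (χ 1 - χ (-1))⁻¹ • (repOfAddChar χ (r 1) v - χ (-1) • v) := by
        ext
        · simp only [Prod.smul_fst, Prod.fst_sub, repOfAddChar_r, smul_eq_mul]
          field_simp
        · simp
      rw [this]
      exact P.smul_mem _ (P.sub_mem (p.apply_mem_toSubmodule _ hv) (P.smul_mem _ hv))
    have hswap : ∀ v ∈ P, v.swap ∈ P := by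
      intro v hv
      have := p.apply_mem_toSubmodule (sr 0) hv
      simp only [repOfAddChar_sr, neg_zero, AddChar.map_zero_eq_one, one_mul] at this
      exact this
    obtain ⟨v, hv, hv0⟩ : ∃ v ∈ P, v.1 ≠ 0 := by
      obtain ⟨v, hv, hv0⟩ := (Submodule.ne_bot_iff P).mp
        fun h => hp (Subrepresentation.toSubmodule_injective h)
      by_cases h1 : v.1 = 0
      · exact ⟨v.swap, hswap v hv, fun h2 => hv0 (Prod.ext h1 h2)⟩
      · exact ⟨v, hv, h1⟩
    have hinl : LinearMap.range (LinearMap.inl k k k) ≤ P := by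
      rintro _ ⟨x, rfl⟩
      have : (x, (0 : k)) = (x / v.1) • (v.1, (0 : k)) := by ext <;> simp [hv0]
      simpa [this] using P.smul_mem (x / v.1) (hfst v hv)
    have hinr : LinearMap.range (LinearMap.inr k k k) ≤ P := by
      rintro _ ⟨x, rfl⟩
      simpa using hswap _ (hinl ⟨x, rfl⟩)
    rw [eq_top_iff, ← LinearMap.sup_range_inl_inr]
    exact sup_le hinl hinr

def rotationIndices (H : Subgroup (DihedralGroup n)) : AddSubgroup (ZMod n) where
  carrier := {i | r i ∈ H}
  zero_mem' := by simp [H.one_mem]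
  add_mem' hi hj := by simpa using H.mul_mem hi hj
  neg_mem' hi := by simpa using H.inv_mem hi

variable {H : Subgroup (DihedralGroup n)}

@[simp] lemma mem_rotationIndices {i : ZMod n} : i ∈ rotationIndices H ↔ r i ∈ H := Iff.rfl

lemma eq_zpowers_r_of_rotationIndices_eq (hsr : ∀ i, sr i ∉ H) {c : ZMod n}
    (hc : rotationIndices H = AddSubgroup.zmultiples c) : H = Subgroup.zpowers (r c) := by
  ext (i | i)
  · rw [← mem_rotationIndices, hc, AddSubgroup.mem_zmultiples_iff, Subgroup.mem_zpowers_iff]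
    simp [r_zpow, mul_comm]
  · simp [hsr i, Subgroup.mem_zpowers_iff, r_zpow]

theorem _root_.IsStrongGelfandPair.two_mem_rotationIndices [NeZero n]
    (hH : IsStrongGelfandPair (DihedralGroup n) H) (hsr : ∀ i, sr i ∉ H) :
    (2 : ZMod n) ∈ rotationIndices H := by
  by_contra h2
  obtain ⟨χ, hχS, hχ2⟩ := AddChar.exists_ne_one_of_notMem h2
  have := isIrreducible_repOfAddChar χ hχ2
  have := FDRep.simple_of_isIrreducible (repOfAddChar χ)
  have hker : H ≤ (FDRep.of (repOfAddChar χ)).ρ.ker := by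
    rintro (i | i) hi
    · ext <;> simp [hχS i hi, hχS (-i) (neg_mem hi)]
    · exact absurd hi (hsr i)
  have := hH.finrank_le_one_of_le_ker _ hker
  change Module.finrank ℂ (ℂ × ℂ) ≤ 1 at this
  simp at this

end DihedralGroup

/-- Theorem 1 (dihedral): for `n ≥ 1`, every strong Gelfand subgroup `H` of the
dihedral group `D_{2n}` is (i) a reflection subgroup `⟨b a^i⟩`, (ii) a dihedral
subgroup (one containing a reflection), (iii) the maximal cyclic subgroup `⟨a⟩`,
or (iv) for `n` even, the index-four cyclic subgroup `⟨a²⟩`. -/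
theorem strong_gelfand_pairs_of_dihedral (n : ℕ) (hn : 1 ≤ n)
    (H : Subgroup (DihedralGroup n))
    (hH : IsStrongGelfandPair (DihedralGroup n) H) :
    (∃ i : ZMod n, H = Subgroup.zpowers (DihedralGroup.sr i)) ∨
    (∃ i : ZMod n, DihedralGroup.sr i ∈ H) ∨
    H = Subgroup.zpowers (DihedralGroup.r 1) ∨
    (Even n ∧ H = Subgroup.zpowers (DihedralGroup.r 1 ^ 2)) := by
  have : NeZero n := ⟨by omega⟩
  by_cases hsr : ∃ i, DihedralGroup.sr i ∈ H
  · exact Or.inr (Or.inl hsr)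
  push Not at hsr
  right; right
  rcases ZMod.eq_zmultiples_one_or_two (hH.two_mem_rotationIndices hsr) with h | ⟨heven, h⟩
  · exact Or.inl (DihedralGroup.eq_zpowers_r_of_rotationIndices_eq hsr h)
  · rw [DihedralGroup.r_one_pow, Nat.cast_two]
    exact Or.inr ⟨heven, DihedralGroup.eq_zpowers_r_of_rotationIndices_eq hsr h⟩
end

section
/- Let n ≥ 2 and let H be a subgroup of the dicyclic group Dic_{4n}. If (Dic_{4n}, H) is a strong Gelfand pair, then H is one of: (i) a subgroup of the form ⟨ba^i⟩ for some i; (ii) a dicyclic subgroup of Dic_{4n}; or (iii) a cyclic subgroup of order n or 2n (namely ⟨a²⟩ or ⟨a⟩). -/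
open CategoryTheory

/-!
If `H` contains some `b a^i` there is nothing to prove, so let `H` lie in the cyclic subgroup
`⟨a⟩ ≅ ℤ/2n`, of order `c`. If `c < n`, pick `ψ(a) = ω^c` with `ω` a primitive `2n`-th root of
unity: this character is trivial on `H` and `ψ² ≠ 1`, so `Ind_{⟨a⟩}^{Dic_{4n}} ψ` is irreducible
of dimension `2`, and `H` acts trivially on it. The trivial representation of `H` then occurs
twice in its restriction. Hence `c` is `n` or `2n`, which makes `H` equal to `⟨a²⟩` or `⟨a⟩`.
-/

universe u v

theorem Representation.isIrreducible_of_finrank_eq_one {k : Type u} {G : Type v} {V : Type*}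
    [Field k] [Monoid G] [AddCommGroup V] [Module k V] (ρ : Representation k G V)
    (h : Module.finrank k V = 1) : ρ.IsIrreducible :=
  have := is_simple_module_of_finrank_eq_one (A := k) h
  { exists_pair_ne := ⟨⊥, ⊤, fun h => bot_ne_top (congrArg Subrepresentation.toSubmodule h)⟩
    eq_bot_or_eq_top σ :=
      (eq_bot_or_eq_top σ.toSubmodule).imp Subrepresentation.ext Subrepresentation.ext }

namespace FDRep

variable {k : Type u} {G : Type v} [Field k] [Group G]

theorem injective_of_mono {X Y : FDRep k G} (f : X ⟶ Y) [Mono f] :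
    Function.Injective f.hom.hom :=
  (Rep.mono_iff_injective _).mp ((forget₂ (FDRep k G) (Rep k G)).map_mono f)

variable {V : Type u} [AddCommGroup V] [Module k V] [FiniteDimensional k V]

noncomputable def rangeSubrepresentation {ρ : Representation k G V} {Y : FDRep k G}
    (f : Y ⟶ of ρ) : Subrepresentation ρ where
  toSubmodule := LinearMap.range f.hom.hom.hom
  apply_mem_toSubmodule g := by
    rintro _ ⟨y, rfl⟩
    exact ⟨Y.ρ g y, congrArg (fun φ => φ.hom.hom y) (f.comm g)⟩

instance simple_of_isIrreducible_s1 (ρ : Representation k G V) [ρ.IsIrreducible] :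
    Simple (of ρ) where
  mono_isIso_iff_nonzero {Y} f _ := by
    rw [ConcreteCategory.isIso_iff_bijective]
    constructor
    · rintro hbij rfl
      have : Nontrivial V := IsSimpleModule.nontrivial (MonoidAlgebra k G) ρ.asModule
      obtain ⟨v, hv⟩ := exists_ne (0 : V)
      obtain ⟨y, hy⟩ := hbij.2 v
      exact hv (hy.symm.trans rfl)
    · intro hf
      refine ⟨injective_of_mono f, ?_⟩
      rcases eq_bot_or_eq_top (rangeSubrepresentation f) with h | h
      · exact absurd (Action.hom_ext _ _ (ObjectProperty.hom_ext _ (ModuleCat.hom_ext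
          (LinearMap.range_eq_bot.mp (congrArg Subrepresentation.toSubmodule h))))) hf
      · exact LinearMap.range_eq_top.mp (congrArg Subrepresentation.toSubmodule h)

theorem finrank_hom_of_isTrivial (W : FDRep k G) (hW : ∀ g, W.ρ g = 1) :
    Module.finrank k (of (Representation.trivial k G k) ⟶ W) = Module.finrank k W := by
  have : (Representation.linHom (of (Representation.trivial k G k)).ρ W.ρ).invariants = ⊤ := by
    ext f
    simp [Representation.mem_invariants, Representation.linHom_apply, hW, Module.End.one_eq_id]
  rw [← (Representation.linHom.invariantsEquivFDRepHom _ W).finrank_eq, this, finrank_top,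
    (LinearMap.ringLmapEquivSelf k k W).finrank_eq]

end FDRep

theorem IsStrongGelfandPair.finrank_le_one {G : Type} [Group G] {H : Subgroup G}
    (hH : IsStrongGelfandPair G H) (V : FDRep ℂ G) [Simple V] (hV : ∀ h ∈ H, V.ρ h = 1) :
    Module.finrank ℂ V ≤ 1 := by
  have := (Representation.trivial ℂ H ℂ).isIrreducible_of_finrank_eq_one (Module.finrank_self ℂ)
  have := hH V (FDRep.of (Representation.trivial ℂ H ℂ)) inferInstance inferInstance
  rwa [FDRep.finrank_hom_of_isTrivial _ fun h => hV h.1 h.2] at this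

theorem ZMod.exists_addChar_of_two_mul_lt {m c : ℕ} [NeZero m] (hc0 : 0 < c) (hc : 2 * c < m) :
    ∃ ψ : AddChar (ZMod m) ℂ, ψ 1 ≠ ψ (-1) ∧ ∀ i : ZMod m, m ∣ i.val * c → ψ i = 1 := by
  obtain ⟨ω, hω⟩ : ∃ ω : ℂ, IsPrimitiveRoot ω m := ⟨_, Complex.isPrimitiveRoot_exp _ (NeZero.ne _)⟩
  have hζ : (ω ^ c) ^ m = 1 := by rw [← pow_mul, mul_comm, pow_mul, hω.pow_eq_one, one_pow]
  set ψ := AddChar.zmodChar m hζ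
  have hψ1 : ψ 1 = ω ^ c := by simpa using AddChar.zmodChar_apply' hζ 1
  refine ⟨ψ, fun h => ?_, fun i hi => ?_⟩
  · have hinv : ψ (-1) * ψ 1 = 1 := by
      rw [← AddChar.map_add_eq_mul, neg_add_cancel, AddChar.map_zero_eq_one]
    rw [← h, hψ1, ← pow_add] at hinv
    exact hω.pow_ne_one_of_pos_of_lt (by omega) (by omega) hinv
  · rw [AddChar.zmodChar_apply, ← pow_mul, hω.pow_eq_one_iff_dvd, mul_comm c]
    exact hi

namespace QuaternionGroup

variable {n : ℕ} {k : Type u}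

/-- The matrices of `Ind_{⟨a⟩}^{Dic_{4n}} ψ` in the basis `1 ⊗ 1, xa 0 ⊗ 1`. -/
def inducedMatrix [CommRing k] (ψ : AddChar (ZMod (2 * n)) k) :
    QuaternionGroup n →* Matrix (Fin 2) (Fin 2) k where
  toFun
    | a i => !![ψ i, 0; 0, ψ (-i)]
    | xa i => !![0, ψ (n - i); ψ i, 0]
  map_one' := by rw [one_def]; simp [Matrix.one_fin_two]
  map_mul' := by
    have hn : (n : ZMod (2 * n)) + n = 0 := by simpa [two_mul] using ZMod.natCast_self (2 * n)
    rintro (i | i) (j | j) <;>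
      simp only [a_mul_a, a_mul_xa, xa_mul_a, xa_mul_xa, Matrix.mul_fin_two, mul_zero, zero_mul,
        add_zero, zero_add, ← AddChar.map_add_eq_mul] <;>
      congr 6 <;> first | ring1 | linear_combination -hn

def inducedRep [CommRing k] (ψ : AddChar (ZMod (2 * n)) k) :
    Representation k (QuaternionGroup n) (Fin 2 → k) :=
  (Matrix.toLinAlgEquiv' : Matrix (Fin 2) (Fin 2) k ≃ₐ[k] _).toMonoidHom.comp (inducedMatrix ψ)

section CommRing

variable [CommRing k] (ψ : AddChar (ZMod (2 * n)) k)

theorem inducedRep_apply (g : QuaternionGroup n) (v : Fin 2 → k) :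
    inducedRep ψ g v = (inducedMatrix ψ g).mulVec v :=
  rfl

theorem inducedRep_a_apply (i : ZMod (2 * n)) (v : Fin 2 → k) :
    inducedRep ψ (a i) v = ![ψ i * v 0, ψ (-i) * v 1] := by
  ext r
  fin_cases r <;> simp [inducedRep_apply, inducedMatrix, Matrix.mulVec, dotProduct]

theorem inducedRep_xa_apply (i : ZMod (2 * n)) (v : Fin 2 → k) :
    inducedRep ψ (xa i) v = ![ψ (n - i) * v 1, ψ i * v 0] := by
  ext r
  fin_cases r <;> simp [inducedRep_apply, inducedMatrix, Matrix.mulVec, dotProduct]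

theorem one_zero_mem_iff_zero_one_mem (σ : Subrepresentation (inducedRep ψ)) :
    ![1, 0] ∈ σ.toSubmodule ↔ ![0, 1] ∈ σ.toSubmodule := by
  constructor <;> intro h
  · simpa [inducedRep_xa_apply] using σ.apply_mem_toSubmodule (xa 0) h
  · simpa [inducedRep_xa_apply] using σ.apply_mem_toSubmodule (xa n) h

end CommRing

section Field

variable [Field k] {ψ : AddChar (ZMod (2 * n)) k}

theorem inducedRep_a_eq_one {i : ZMod (2 * n)} (hi : ψ i = 1) : inducedRep ψ (a i) = 1 := by
  ext v r
  fin_cases r <;> simp [inducedRep_a_apply, AddChar.map_neg_eq_inv, hi]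

theorem one_zero_mem_or_zero_one_mem (hψ : ψ 1 ≠ ψ (-1)) (σ : Subrepresentation (inducedRep ψ))
    {v : Fin 2 → k} (hv : v ∈ σ.toSubmodule) (hv0 : v ≠ 0) :
    ![1, 0] ∈ σ.toSubmodule ∨ ![0, 1] ∈ σ.toSubmodule := by
  set S := σ.toSubmodule
  by_cases hv1 : v 1 = 0
  · left
    have hv0' : v 0 ≠ 0 := fun h => hv0 (by ext r; fin_cases r <;> simp [h, hv1])
    have hsub : inducedRep ψ (a 1) v - ψ (-1) • v = ((ψ 1 - ψ (-1)) * v 0) • ![1, 0] := by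
      ext r; fin_cases r <;> simp [inducedRep_a_apply]; ring
    rw [← S.smul_mem_iff (mul_ne_zero (sub_ne_zero.mpr hψ) hv0'), ← hsub]
    exact S.sub_mem (σ.apply_mem_toSubmodule _ hv) (S.smul_mem _ hv)
  · right
    have hsub : inducedRep ψ (a 1) v - ψ 1 • v = ((ψ (-1) - ψ 1) * v 1) • ![0, 1] := by
      ext r; fin_cases r <;> simp [inducedRep_a_apply]; ring
    rw [← S.smul_mem_iff (mul_ne_zero (sub_ne_zero.mpr hψ.symm) hv1), ← hsub]
    exact S.sub_mem (σ.apply_mem_toSubmodule _ hv) (S.smul_mem _ hv)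

theorem isIrreducible_inducedRep (hψ : ψ 1 ≠ ψ (-1)) : (inducedRep ψ).IsIrreducible := by
  refine
    { exists_pair_ne := ⟨⊥, ⊤, fun h => bot_ne_top (congrArg Subrepresentation.toSubmodule h)⟩
      eq_bot_or_eq_top σ := or_iff_not_imp_left.mpr fun hσ => ?_ }
  obtain ⟨v, hv, hv0⟩ :=
    Submodule.exists_mem_ne_zero_of_ne_bot fun h => hσ (Subrepresentation.ext h)
  have he : ![1, 0] ∈ σ.toSubmodule ∧ ![0, 1] ∈ σ.toSubmodule := by
    rcases one_zero_mem_or_zero_one_mem hψ σ hv hv0 with h | h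
    · exact ⟨h, (one_zero_mem_iff_zero_one_mem ψ σ).mp h⟩
    · exact ⟨(one_zero_mem_iff_zero_one_mem ψ σ).mpr h, h⟩
  refine Subrepresentation.ext (Submodule.eq_top_iff'.mpr fun w => ?_)
  have hw : w = w 0 • ![1, 0] + w 1 • ![0, 1] := by
    ext r; fin_cases r <;> simp
  rw [hw]
  exact σ.toSubmodule.add_mem (σ.toSubmodule.smul_mem _ he.1) (σ.toSubmodule.smul_mem _ he.2)

end Field

variable [NeZero n] {H : Subgroup (QuaternionGroup n)}

theorem a_mem_zpowers_a_one (i : ZMod (2 * n)) : a i ∈ Subgroup.zpowers (a 1) :=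
  Subgroup.mem_zpowers_iff.mpr ⟨i.val, by rw [zpow_natCast, a_one_pow, ZMod.natCast_zmod_val]⟩

theorem le_zpowers_a_one (hxa : ∀ i, xa i ∉ H) : H ≤ Subgroup.zpowers (a 1) := by
  rintro (i | i) hi
  · exact a_mem_zpowers_a_one i
  · exact absurd hi (hxa i)

theorem two_mul_dvd_val_mul_card {i : ZMod (2 * n)} (hi : a i ∈ H) :
    2 * n ∣ i.val * Nat.card H := by
  have h : (a 1 : QuaternionGroup n) ^ (i.val * Nat.card H) = 1 := by
    rw [pow_mul, a_one_pow, ZMod.natCast_zmod_val]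
    exact orderOf_dvd_iff_pow_eq_one.mp (H.orderOf_dvd_natCard hi)
  simpa only [orderOf_a_one] using orderOf_dvd_of_pow_eq_one h

theorem le_card_of_isStrongGelfandPair (hH : IsStrongGelfandPair (QuaternionGroup n) H)
    (hxa : ∀ i, xa i ∉ H) : n ≤ Nat.card H := by
  by_contra! hc
  obtain ⟨ψ, hψ, hker⟩ :=
    ZMod.exists_addChar_of_two_mul_lt (m := 2 * n) (c := Nat.card H) Nat.card_pos (by omega)
  have := isIrreducible_inducedRep hψ
  have := hH.finrank_le_one (FDRep.of (inducedRep ψ)) ?_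
  · simp at this
  rintro (i | i) hi
  · exact inducedRep_a_eq_one (hker i (two_mul_dvd_val_mul_card hi))
  · exact absurd hi (hxa i)

theorem eq_zpowers_a_one_sq_of_card_eq (hxa : ∀ i, xa i ∉ H) (hc : Nat.card H = n) :
    H = Subgroup.zpowers (a 1 ^ 2) := by
  have hle : H ≤ Subgroup.zpowers (a 1 ^ 2) := by
    rintro (i | i) hi
    · have hdvd := two_mul_dvd_val_mul_card hi
      rw [hc] at hdvd
      obtain ⟨m, hm⟩ := Nat.dvd_of_mul_dvd_mul_right (Nat.pos_of_neZero n) hdvd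
      exact Subgroup.mem_zpowers_iff.mpr
        ⟨m, by rw [zpow_natCast, ← pow_mul, a_one_pow, ← hm, ZMod.natCast_zmod_val]⟩
    · exact absurd hi (hxa i)
  refine Subgroup.eq_of_le_of_card_ge hle ?_
  rw [Nat.card_zpowers, orderOf_pow_of_dvd two_ne_zero (by simp [orderOf_a_one]), orderOf_a_one,
    hc]
  omega

end QuaternionGroup

open QuaternionGroup in
/-- Theorem 2 (dicyclic): for `n ≥ 2`, every strong Gelfand subgroup `H` of the
dicyclic group `Dic_{4n}` is (i) a subgroup of the form `⟨b a^i⟩`, (ii) a dicyclic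
subgroup (one containing an element `b a^i`), or (iii) cyclic of order `n` or `2n`,
namely `⟨a²⟩` or `⟨a⟩`. -/
theorem strong_gelfand_pairs_of_dicyclic (n : ℕ) (hn : 2 ≤ n)
    (H : Subgroup (QuaternionGroup n))
    (hH : IsStrongGelfandPair (QuaternionGroup n) H) :
    (∃ i : ZMod (2 * n), H = Subgroup.zpowers (QuaternionGroup.xa i)) ∨
    (∃ i : ZMod (2 * n), QuaternionGroup.xa i ∈ H) ∨
    H = Subgroup.zpowers (QuaternionGroup.a 1 ^ 2) ∨
    H = Subgroup.zpowers (QuaternionGroup.a 1) := by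
  have : NeZero n := ⟨by omega⟩
  by_cases hxa : ∃ i, xa i ∈ H
  · exact Or.inr (Or.inl hxa)
  rw [not_exists] at hxa
  have hle := le_zpowers_a_one hxa
  obtain ⟨m, hm⟩ : Nat.card H ∣ 2 * n := by
    simpa only [Nat.card_zpowers, orderOf_a_one] using Subgroup.card_dvd_of_le hle
  have hge := le_card_of_isStrongGelfandPair hH hxa
  obtain rfl | rfl : m = 1 ∨ m = 2 := by
    have : m ≤ 2 := by nlinarith
    interval_cases m <;> omega
  · refine Or.inr (Or.inr (Or.inr (Subgroup.eq_of_le_of_card_ge hle ?_)))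
    rw [Nat.card_zpowers, orderOf_a_one]
    omega
  · exact Or.inr (Or.inr (Or.inl (eq_zpowers_a_one_sq_of_card_eq hxa (by omega))))
end

section
/- For every n ≥ 1 and every i, the pair (D_{2n}, ⟨ba^i⟩) is a strong Gelfand pair, where ⟨ba^i⟩ is the order-2 subgroup of D_{2n} generated by the reflection ba^i. -/
/-!
Let `s = sr i`. In a simple representation `V` of `D_{2n}` over an algebraically closed field,
take an eigenvector `v` of the rotation `r 1`. All rotations preserve the line `k ∙ v`, so
`span {v, s v}` is a subrepresentation, hence all of `V`. So `dim V ≤ 2`, and an eigenspace of `s`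
of dimension `2` would be all of `V`, forcing `s v ∈ k ∙ v` and `dim V = 1`. Hence the eigenspaces
of `s` are at most one-dimensional. Finally, for a simple representation `W` of `⟨s⟩`, evaluation
at an eigenvector of `s` embeds `Hom(W, Res V)` into an eigenspace of `s` on `V`.
-/

open CategoryTheory

open Module Submodule

namespace Representation

section Group

variable {k G V : Type*} [Field k] [Group G] [AddCommGroup V] [Module k V]

def lineStabilizer (ρ : Representation k G V) (v : V) : Subgroup G where
  carrier := {g | ρ g v ∈ k ∙ v}
  one_mem' := by simp [mem_span_singleton_self]
  mul_mem' {g h} hg hh := by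
    obtain ⟨c, hc⟩ := mem_span_singleton.mp hh
    simpa [Module.End.mul_apply, ← hc] using smul_mem _ c hg
  inv_mem' {g} hg := by
    obtain ⟨c, hc⟩ := mem_span_singleton.mp hg
    have hv : v = c • ρ g⁻¹ v := by
      rw [← map_smul, hc, ← Module.End.mul_apply, ← map_mul, inv_mul_cancel, map_one,
        Module.End.one_apply]
    rcases eq_or_ne c 0 with rfl | hc0
    · rw [zero_smul] at hv
      simp [hv]
    · change ρ g⁻¹ v ∈ k ∙ v
      rw [(eq_inv_smul_iff₀ hc0).mpr hv.symm]
      exact smul_mem _ _ (mem_span_singleton_self v)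

end Group

namespace IsIrreducible

variable {k G V : Type*} [Field k] [Monoid G] [AddCommGroup V] [Module k V]

theorem nontrivial_s3 (ρ : Representation k G V) [ρ.IsIrreducible] : Nontrivial V := by
  obtain ⟨v, -, hv⟩ := SetLike.exists_of_lt (bot_lt_top : (⊥ : Subrepresentation ρ) < ⊤)
  exact ⟨v, 0, fun h ↦ hv (h ▸ (⊥ : Submodule k V).zero_mem)⟩

variable {ρ : Representation k G V} [ρ.IsIrreducible]

theorem eq_top_of_mem {p : Submodule k V} (hp : ∀ g, ∀ x ∈ p, ρ g x ∈ p) {v : V}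
    (hv : v ∈ p) (hv0 : v ≠ 0) : p = ⊤ := by
  let q : Subrepresentation ρ := ⟨p, fun g _ hx ↦ hp g _ hx⟩
  have hq : q = ⊤ := (eq_bot_or_eq_top q).resolve_left fun h ↦
    hv0 ((mem_bot k).mp (show v ∈ (⊥ : Subrepresentation ρ).toSubmodule from h ▸ hv))
  exact congrArg Subrepresentation.toSubmodule hq

end IsIrreducible

end Representation

namespace FDRep

variable {k G : Type*} [Field k] [Monoid G]

theorem isIrreducible_of_simple (V : FDRep k G) [Simple V] :
    Representation.IsIrreducible V.ρ := by
  have : Nontrivial V := not_subsingleton_iff_nontrivial.mp fun _ ↦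
    id_nonzero V (by ext; exact Subsingleton.elim _ _)
  refine { exists_pair_ne := ⟨⊥, ⊤, fun h ↦ ?_⟩, eq_bot_or_eq_top := fun p ↦ ?_ }
  · obtain ⟨v, hv⟩ := exists_ne (0 : V)
    exact hv ((mem_bot k).mp (show v ∈ (⊥ : Subrepresentation V.ρ).toSubmodule from h ▸ mem_top))
  refine or_iff_not_imp_left.mpr fun hp ↦ ?_
  let ι : FDRep.of p.toRepresentation ⟶ V :=
    ⟨FGModuleCat.ofHom p.toSubmodule.subtype, fun _ ↦ rfl⟩
  have : Mono ι := ConcreteCategory.mono_of_injective ι Subtype.val_injective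
  obtain ⟨v, hv, hv0⟩ := exists_mem_ne_zero_of_ne_bot
    fun h ↦ hp (Subrepresentation.toSubmodule_injective h)
  have : IsIso ι := isIso_of_mono_of_nonzero fun h ↦ hv0 congr(($h).hom ⟨v, hv⟩)
  refine Subrepresentation.toSubmodule_injective (eq_top_iff'.mpr fun w ↦ ?_)
  obtain ⟨x, rfl⟩ := (ConcreteCategory.bijective_of_isIso ι).2 w
  exact x.2

theorem hom_comm_apply {W X : FDRep k G} (f : W ⟶ X) (g : G) (w : W) :
    f.hom (W.ρ g w) = X.ρ g (f.hom w) :=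
  congr(($(f.comm g)) w)

theorem hom_eq_zero_of_apply_eq_zero {W X : FDRep k G} [Simple W] (f : W ⟶ X) {w : W}
    (hw0 : w ≠ 0) (hfw : f.hom w = 0) : f = 0 := by
  have := isIrreducible_of_simple W
  let φ : Representation.IntertwiningMap W.ρ X.ρ :=
    (f.hom.hom.hom).intertwiningMap_of_isIntertwiningMap _ _ (hom_comm_apply f)
  rcases Representation.IsIrreducible.injective_or_eq_zero φ with h | h
  · exact absurd (h (hfw.trans (map_zero φ).symm)) hw0
  · ext v
    exact congr($h v)

theorem exists_finrank_hom_le_finrank_eigenspace [IsAlgClosed k] (W X : FDRep k G) [Simple W]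
    (g : G) : ∃ μ : k, finrank k (W ⟶ X) ≤ finrank k (End.eigenspace (X.ρ g) μ) := by
  have := (isIrreducible_of_simple W).nontrivial_s3
  obtain ⟨μ, hμ⟩ := End.exists_eigenvalue (W.ρ g)
  obtain ⟨w, hw⟩ := hμ.exists_hasEigenvector
  let ev : (W ⟶ X) →ₗ[k] End.eigenspace (X.ρ g) μ :=
    { toFun f := ⟨f.hom w, End.mem_eigenspace_iff.mpr <| by
        rw [← hom_comm_apply, hw.apply_eq_smul, map_smul]⟩
      map_add' _ _ := rfl
      map_smul' _ _ := rfl }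
  refine ⟨μ, LinearMap.finrank_le_finrank_of_injective (f := ev) ?_⟩
  exact (injective_iff_map_eq_zero ev).mpr fun f hf ↦
    hom_eq_zero_of_apply_eq_zero f hw.2 congr(Subtype.val $hf)

end FDRep

theorem finrank_span_pair_le_two {K V : Type*} [DivisionRing K] [AddCommGroup V] [Module K V]
    (v w : V) : finrank K (span K {v, w}) ≤ 2 := by
  classical
  have := (finrank_span_finset_le_card (R := K) ({v, w} : Finset V)).trans Finset.card_le_two
  rwa [Finset.coe_insert, Finset.coe_singleton] at this

namespace DihedralGroup

variable {k V : Type*} [Field k] [AddCommGroup V] [Module k V] {n : ℕ}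
  {ρ : Representation k (DihedralGroup n) V} {v : V}

theorem r_mem_zpowers_r_one (j : ZMod n) : r j ∈ Subgroup.zpowers (r 1 : DihedralGroup n) :=
  ⟨(j.cast : ℤ), by dsimp only; rw [r_one_zpow, ZMod.intCast_zmod_cast]⟩

theorem apply_r_mem_span (hv : ρ (r 1) v ∈ k ∙ v) (j : ZMod n) : ρ (r j) v ∈ k ∙ v :=
  (Subgroup.zpowers_le (H := ρ.lineStabilizer v)).mpr hv (r_mem_zpowers_r_one j)

theorem apply_sr_mem_span (hv : ρ (r 1) v ∈ k ∙ v) (i j : ZMod n) :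
    ρ (sr j) v ∈ k ∙ ρ (sr i) v := by
  obtain ⟨c, hc⟩ := mem_span_singleton.mp (apply_r_mem_span hv (j - i))
  rw [show sr j = sr i * r (j - i) by rw [sr_mul_r, add_sub_cancel], map_mul,
    Module.End.mul_apply, ← hc, map_smul]
  exact smul_mem _ c (mem_span_singleton_self _)

theorem span_pair_sr_eq_top [ρ.IsIrreducible] (hv0 : v ≠ 0) (hv : ρ (r 1) v ∈ k ∙ v) (i : ZMod n) :
    span k {v, ρ (sr i) v} = ⊤ := by
  refine Representation.IsIrreducible.eq_top_of_mem (ρ := ρ) (fun g x hx ↦ ?_)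
    (subset_span (by simp)) hv0
  have hv_le : k ∙ v ≤ span k {v, ρ (sr i) v} := span_mono (by simp)
  have hsv_le : k ∙ ρ (sr i) v ≤ span k {v, ρ (sr i) v} := span_mono (by simp)
  suffices (span k {v, ρ (sr i) v}).map (ρ g) ≤ span k {v, ρ (sr i) v} from
    this (mem_map_of_mem hx)
  rw [map_span, span_le]
  rintro _ ⟨y, hy, rfl⟩
  rcases hy with rfl | rfl <;> rcases g with j | j
  · exact hv_le (apply_r_mem_span hv j)
  · exact hsv_le (apply_sr_mem_span hv i j)
  · rw [← Module.End.mul_apply, ← map_mul, r_mul_sr]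
    exact hsv_le (apply_sr_mem_span hv i _)
  · rw [← Module.End.mul_apply, ← map_mul, sr_mul_sr]
    exact hv_le (apply_r_mem_span hv _)

theorem finrank_eigenspace_sr_le_one [IsAlgClosed k] [FiniteDimensional k V] [ρ.IsIrreducible]
    (i : ZMod n) (μ : k) : finrank k (End.eigenspace (ρ (sr i)) μ) ≤ 1 := by
  have := Representation.IsIrreducible.nontrivial_s3 ρ
  obtain ⟨c, hc⟩ := End.exists_eigenvalue (ρ (r 1))
  obtain ⟨v, hv⟩ := hc.exists_hasEigenvector
  have htop := span_pair_sr_eq_top hv.2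
    (hv.apply_eq_smul ▸ smul_mem _ _ (mem_span_singleton_self v)) i
  have hV : finrank k V ≤ 2 := by
    rw [← finrank_top, ← htop]
    exact finrank_span_pair_le_two _ _
  by_contra! hE
  have hE_top : End.eigenspace (ρ (sr i)) μ = ⊤ :=
    eq_top_of_finrank_eq ((finrank_le _).antisymm (hV.trans hE))
  have hsv : ρ (sr i) v = μ • v := End.mem_eigenspace_iff.mp (hE_top ▸ mem_top)
  have hline : (⊤ : Submodule k V) ≤ k ∙ v := htop ▸ span_le.mpr (Set.pair_subset
    (mem_span_singleton_self v) (hsv ▸ smul_mem _ _ (mem_span_singleton_self v)))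
  have hV_le_one : finrank k V ≤ 1 := calc
    finrank k V = finrank k (⊤ : Submodule k V) := (finrank_top k V).symm
    _ ≤ finrank k (k ∙ v) := finrank_mono hline
    _ = 1 := finrank_span_singleton hv.2
  have hE_le := (End.eigenspace (ρ (sr i)) μ).finrank_le
  omega

end DihedralGroup

theorem isStrongGelfandPair_dihedral_reflection_general (n : ℕ) (i : ZMod n) :
    IsStrongGelfandPair (DihedralGroup n)
      (Subgroup.zpowers (DihedralGroup.sr i)) := by
  intro V W _ _
  have := FDRep.isIrreducible_of_simple V
  obtain ⟨μ, hμ⟩ := FDRep.exists_finrank_hom_le_finrank_eigenspace W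
    ((Action.res (FGModuleCat ℂ) (Subgroup.zpowers (DihedralGroup.sr i)).subtype).obj V)
    ⟨_, Subgroup.mem_zpowers _⟩
  exact hμ.trans (DihedralGroup.finrank_eigenspace_sr_le_one (ρ := V.ρ) i μ)

/-- For every `n ≥ 1` and every `i`, the pair `(D_{2n}, ⟨b a^i⟩)` is a strong
Gelfand pair, where `b a^i` is the reflection `sr i`. -/
theorem isStrongGelfandPair_dihedral_reflection (n : ℕ) (hn : 1 ≤ n) (i : ZMod n) :
    IsStrongGelfandPair (DihedralGroup n)
      (Subgroup.zpowers (DihedralGroup.sr i)) :=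
  isStrongGelfandPair_dihedral_reflection_general n i
end

section
/- Let n ≥ 4 be even, write n = 2m, and let d be a divisor of n with 1 < d < n and d ≠ m. Then the pair (D_{2n}, ⟨a^{n/d}⟩), where ⟨a^{n/d}⟩ is the cyclic subgroup of order d of the rotation subgroup of D_{2n}, is not a strong Gelfand pair. Consequently, for n even, no proper subgroup of ⟨a²⟩ ≤ D_{2n} other than the subgroups excluded above is a strong Gelfand subgroup. -/
/-!
The two-dimensional representation of `D_{2n}` induced from a character `ψ` of the rotation
subgroup `ℤ/n` sends `r i` to `diag(ψ i, ψ (-i))`. Its character is `ψ i + ψ (-i)` on rotations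
and `0` on reflections, so it has norm `1`, i.e. the representation is irreducible, as soon as
`ψ² ≠ 1`. For a subgroup `H` of rotations of order `d`, take `ψ = ξ^d` with `ξ` a primitive
`n`-th root of unity: the representation is then trivial on `H`, so its restriction to `H`
contains the trivial representation twice, and `ψ² ≠ 1` means `n ∤ 2d`. This holds for
`H = ⟨a^{n/d}⟩` with `d ≠ m`, and for every proper subgroup of `⟨a²⟩`, whose order is a proper
divisor of `m`.
-/

open CategoryTheory

namespace FDRep

theorem finrank_hom_of_forall_ρ_eq_one {k : Type*} [Field k] {G : Type*} [Group G]
    {X Y : FDRep k G} (hX : ∀ g, X.ρ g = 1) (hY : ∀ g, Y.ρ g = 1) :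
    Module.finrank k (X ⟶ Y) = Module.finrank k X * Module.finrank k Y := by
  have htop : (Representation.linHom X.ρ Y.ρ).invariants = ⊤ := by
    ext f
    simp [Representation.mem_invariants, Representation.linHom_apply, hX, hY,
      Module.End.one_eq_id]
  rw [← (Representation.linHom.invariantsEquivFDRepHom X Y).finrank_eq, htop, finrank_top,
    Module.finrank_linearMap]

theorem simple_trivial (G : Type) [Group G] [Finite G] :
    Simple (FDRep.of (Representation.trivial ℂ G ℂ)) := by
  have := Fintype.ofFinite G
  rw [simple_iff_char_is_norm_one]
  simp [FDRep.character, Nat.card_eq_fintype_card]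

end FDRep

theorem not_isStrongGelfandPair_of_forall_ρ_eq_one {G : Type} [Group G] [Finite G]
    {H : Subgroup G} (V : FDRep ℂ G) [Simple V] (hV : 2 ≤ Module.finrank ℂ V)
    (hH : ∀ h ∈ H, V.ρ h = 1) : ¬ IsStrongGelfandPair G H := by
  intro hGelfand
  have hmult := hGelfand V _ inferInstance (FDRep.simple_trivial H)
  have htriv : Module.finrank ℂ (FDRep.of (Representation.trivial ℂ H ℂ)).V = 1 :=
    Module.finrank_self ℂ
  rw [FDRep.finrank_hom_of_forall_ρ_eq_one (X := FDRep.of (Representation.trivial ℂ H ℂ))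
    (Y := (Action.res (FGModuleCat ℂ) H.subtype).obj V) (fun _ => rfl) (fun h => hH h h.2), htriv,
    one_mul] at hmult
  exact absurd (hV.trans hmult) (by norm_num)

theorem AddChar.dvd_of_zmodChar_pow_eq_one {C : Type*} [CommMonoid C] {n : ℕ} [NeZero n] {ξ : C}
    (hξ : IsPrimitiveRoot ξ n) {k : ℕ} (h : zmodChar n hξ.pow_eq_one ^ k = 1) : n ∣ k := by
  have h1 := congr($h 1)
  rw [pow_apply, ← Nat.cast_one, zmodChar_apply', one_apply, pow_one] at h1
  exact (hξ.pow_eq_one_iff_dvd k).mp h1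

namespace DihedralGroup

variable {n : ℕ}

theorem sum_univ {M : Type*} [AddCommMonoid M] [NeZero n] (f : DihedralGroup n → M) :
    ∑ g, f g = ∑ i, f (r i) + ∑ i, f (sr i) :=
  (Fintype.sum_equiv equivSum.symm _ _ fun _ => rfl).symm.trans (Fintype.sum_sum_type _)

theorem card_zpowers_r_one_pow [NeZero n] {k : ℕ} (hk : k ∣ n) :
    Nat.card (Subgroup.zpowers ((r 1 : DihedralGroup n) ^ k)) = n / k := by
  rw [Nat.card_zpowers, orderOf_pow, orderOf_r_one, Nat.gcd_eq_right hk]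

theorem zpowers_r_one_pow_le (k : ℕ) :
    Subgroup.zpowers ((r 1 : DihedralGroup n) ^ k) ≤ Subgroup.zpowers (r 1) :=
  Subgroup.zpowers_le.mpr (Subgroup.pow_mem _ (Subgroup.mem_zpowers _) k)

section AddCharRep

variable {R : Type*} [CommRing R] (ψ : AddChar (ZMod n) R)

def addCharMatrix : DihedralGroup n →* Matrix (Fin 2) (Fin 2) R where
  toFun
    | r i => !![ψ i, 0; 0, ψ (-i)]
    | sr i => !![0, ψ (-i); ψ i, 0]
  map_one' := by simp [← r_zero, Matrix.one_fin_two]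
  map_mul' := by
    rintro (i | i) (j | j) <;> simp [← AddChar.map_add_eq_mul, sub_eq_add_neg, add_comm]

def addCharRep : Representation R (DihedralGroup n) (Fin 2 → R) :=
  Matrix.toLinAlgEquiv'.toMonoidHom.comp (addCharMatrix ψ)

theorem addCharRep_apply (g : DihedralGroup n) :
    addCharRep ψ g = Matrix.toLin' (addCharMatrix ψ g) :=
  rfl

theorem addCharRep_r_eq_one {i : ZMod n} (hi : ψ i = 1) : addCharRep ψ (r i) = 1 := by
  have hneg : ψ (-i) = 1 := by simpa [hi] using (AddChar.map_add_eq_mul ψ (-i) i).symm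
  simp [addCharRep_apply, addCharMatrix, hi, hneg, ← Matrix.one_fin_two, Module.End.one_eq_id]

theorem addCharRep_pow_r_eq_one {c : ℕ} {i : ZMod n} (hi : r i ^ c = 1) :
    addCharRep (ψ ^ c) (r i) = 1 := by
  apply addCharRep_r_eq_one
  rw [r_pow, ← r_zero, r.injEq] at hi
  rw [AddChar.pow_apply, ← AddChar.map_nsmul_eq_pow, nsmul_eq_mul, mul_comm, hi,
    AddChar.map_zero_eq_one]

end AddCharRep

section Complex

variable (ψ : AddChar (ZMod n) ℂ)

theorem character_addCharRep_r (i : ZMod n) :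
    (FDRep.of (addCharRep ψ)).character (r i) = ψ i + ψ (-i) := by
  simp [FDRep.character, addCharRep_apply, addCharMatrix, Matrix.trace_fin_two]

theorem character_addCharRep_sr (i : ZMod n) :
    (FDRep.of (addCharRep ψ)).character (sr i) = 0 := by
  simp [FDRep.character, addCharRep_apply, addCharMatrix, Matrix.trace_fin_two]

theorem simple_addCharRep [NeZero n] (hψ : ψ ^ 2 ≠ 1) : Simple (FDRep.of (addCharRep ψ)) := by
  have hsum : ∑ i, (ψ ^ 2) i = 0 := AddChar.sum_eq_zero_iff_ne_zero.mpr hψ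
  have hsum_neg : ∑ i, (ψ ^ 2) (-i) = 0 :=
    (Fintype.sum_equiv (Equiv.neg _) _ _ fun _ => rfl).trans hsum
  have hinv (i : ZMod n) : ψ i * ψ (-i) = 1 := by
    rw [← AddChar.map_add_eq_mul, add_neg_cancel, AddChar.map_zero_eq_one]
  rw [FDRep.simple_iff_char_is_norm_one, sum_univ]
  simp only [inv_r, inv_sr, character_addCharRep_r, character_addCharRep_sr, neg_neg, mul_zero,
    Finset.sum_const_zero, add_zero]
  calc ∑ i, (ψ i + ψ (-i)) * (ψ (-i) + ψ i) = ∑ i, ((ψ ^ 2) i + 2 + (ψ ^ 2) (-i)) := by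
        refine Finset.sum_congr rfl fun i _ => ?_
        simp only [AddChar.pow_apply]
        linear_combination 2 * hinv i
    _ = Nat.card (DihedralGroup n) := by
        rw [Finset.sum_add_distrib, Finset.sum_add_distrib, hsum, hsum_neg, nat_card]
        simp only [Finset.sum_const, Finset.card_univ, ZMod.card, nsmul_eq_mul, zero_add,
          add_zero, Nat.cast_mul, Nat.cast_ofNat]
        ring

end Complex

theorem not_isStrongGelfandPair_of_le_zpowers_r_one [NeZero n] {H : Subgroup (DihedralGroup n)}
    (hH : H ≤ Subgroup.zpowers (r 1)) (hcard : ¬ n ∣ 2 * Nat.card H) :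
    ¬ IsStrongGelfandPair (DihedralGroup n) H := by
  have hξ := Complex.isPrimitiveRoot_exp n (NeZero.ne n)
  let ψ := AddChar.zmodChar n hξ.pow_eq_one ^ Nat.card H
  have hψ : ψ ^ 2 ≠ 1 := fun h =>
    hcard (AddChar.dvd_of_zmodChar_pow_eq_one hξ ((pow_mul' _ 2 _).trans h))
  have := simple_addCharRep ψ hψ
  refine not_isStrongGelfandPair_of_forall_ρ_eq_one (FDRep.of (addCharRep ψ))
    (Module.finrank_fin_fun ℂ).ge fun h hh => ?_
  obtain ⟨j, rfl⟩ := Subgroup.mem_zpowers_iff.mp (hH hh)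
  rw [r_one_zpow] at hh ⊢
  exact addCharRep_pow_r_eq_one _ (congrArg Subtype.val (pow_card_eq_one' (x := (⟨_, hh⟩ : H))))

end DihedralGroup

theorem not_isStrongGelfandPair_dihedral_even_general (n m : ℕ) (hn : 4 ≤ n)
    (hm : n = 2 * m) :
    (∀ d : ℕ, d ∣ n → 1 < d → d < n → d ≠ m →
      ¬ IsStrongGelfandPair (DihedralGroup n)
        (Subgroup.zpowers (DihedralGroup.r 1 ^ (n / d)))) ∧
    (∀ H : Subgroup (DihedralGroup n),
      H < Subgroup.zpowers (DihedralGroup.r 1 ^ 2) → H ≠ ⊥ →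
      ¬ IsStrongGelfandPair (DihedralGroup n) H) := by
  have : NeZero n := ⟨by omega⟩
  refine ⟨fun d hd _ hdn hdm => ?_, fun H hlt _ => ?_⟩
  · refine DihedralGroup.not_isStrongGelfandPair_of_le_zpowers_r_one
      (DihedralGroup.zpowers_r_one_pow_le _) fun hdvd => hdm ?_
    rw [DihedralGroup.card_zpowers_r_one_pow (Nat.div_dvd_of_dvd hd),
      Nat.div_div_self hd (NeZero.ne n)] at hdvd
    have := Nat.eq_of_dvd_of_lt_two_mul (by omega) hdvd (by omega)
    omega
  · have hm_card : Nat.card (Subgroup.zpowers (DihedralGroup.r (1 : ZMod n) ^ 2)) = m := by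
      rw [DihedralGroup.card_zpowers_r_one_pow ⟨m, hm⟩]; omega
    have hdvd_m : Nat.card H ∣ m := hm_card ▸ Subgroup.card_dvd_of_le hlt.le
    have hne_m : Nat.card H ≠ m := fun h =>
      hlt.ne (Subgroup.eq_of_le_of_card_ge hlt.le (hm_card.trans h.symm).le)
    refine DihedralGroup.not_isStrongGelfandPair_of_le_zpowers_r_one
      (hlt.le.trans (DihedralGroup.zpowers_r_one_pow_le 2)) fun hdvd => hne_m ?_
    have hpos : 0 < Nat.card H := Nat.card_pos
    have := Nat.le_of_dvd (by omega : 0 < m) hdvd_m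
    have := Nat.eq_of_dvd_of_lt_two_mul (by omega) hdvd (by omega)
    omega

/-- For `n = 2m ≥ 4` even and `d ∣ n` with `1 < d < n` and `d ≠ m`, the pair
`(D_{2n}, ⟨a^{n/d}⟩)` is not a strong Gelfand pair; consequently no proper
nontrivial subgroup of `⟨a²⟩ ≤ D_{2n}` is a strong Gelfand subgroup. -/
theorem not_isStrongGelfandPair_dihedral_even (n m : ℕ) (hn : 4 ≤ n)
    (heven : Even n) (hm : n = 2 * m) :
    (∀ d : ℕ, d ∣ n → 1 < d → d < n → d ≠ m →
      ¬ IsStrongGelfandPair (DihedralGroup n)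
        (Subgroup.zpowers (DihedralGroup.r 1 ^ (n / d)))) ∧
    (∀ H : Subgroup (DihedralGroup n),
      H < Subgroup.zpowers (DihedralGroup.r 1 ^ 2) → H ≠ ⊥ →
      ¬ IsStrongGelfandPair (DihedralGroup n) H) :=
  not_isStrongGelfandPair_dihedral_even_general n m hn hm
end

section
/- For every n ≥ 2 and every i, the pair (Dic_{4n}, ⟨ba^i⟩) is a strong Gelfand pair, where ⟨ba^i⟩ is the cyclic subgroup of order 4 of the dicyclic group Dic_{4n} generated by the element ba^i. -/
open CategoryTheory

/-!
An irreducible representation `W` of the cyclic group `⟨x⟩`, `x = b a^i`, is a line `ℂ w` on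
which `x` acts by a scalar `μ`, so `f ↦ f w` embeds `Hom(W, V)` into the `μ`-eigenspace of
`ρ x`. For an irreducible representation `V` of the dicyclic group, `ρ a + ρ a⁻¹` is central,
hence a scalar `t` by Schur's lemma, so `ρ a` satisfies `ρ a ^ 2 = t ρ a - 1` and
`ρ x ρ a = (t - ρ a) ρ x`. Hence for an eigenvector `u` of `ρ x` the span of `u` and `ρ a u`
is invariant, so it is all of `V`; applying `ρ x` to an eigenvector `c u + d ρ a u` gives
`d (2 ρ a u - t u) = 0`, which makes it a multiple of `u`.
-/

open Module

namespace Representation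

variable {k G V : Type*} [Field k] [AddCommGroup V] [Module k V]

section Group

variable [Group G] (ρ : Representation k G V) [FiniteDimensional k V]

lemma mem_invtSubmodule_inv {p : Submodule k V} {g : G}
    (hp : p ∈ Module.End.invtSubmodule (ρ g)) : p ∈ Module.End.invtSubmodule (ρ g⁻¹) := by
  have hmap : p.map (ρ g) = p :=
    Submodule.eq_of_le_of_finrank_eq ((Module.End.mem_invtSubmodule_iff_map_le _).mp hp)
      (Submodule.equivMapOfInjective _ (ρ.apply_bijective g).injective p).finrank_eq.symm
  intro v hv
  rw [← hmap] at hv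
  obtain ⟨w, hw, rfl⟩ := hv
  simpa using hw

lemma mem_invtSubmodule_of_closure_eq_top {S : Set G} (hS : Subgroup.closure S = ⊤)
    {p : Submodule k V} (hp : ∀ s ∈ S, p ∈ Module.End.invtSubmodule (ρ s)) :
    p ∈ ρ.invtSubmodule := by
  refine ρ.mem_invtSubmodule.mpr fun g ↦ ?_
  induction (hS ▸ Subgroup.mem_top g : g ∈ Subgroup.closure S) using
    Subgroup.closure_induction with
  | mem s hs => exact hp s hs
  | one => simp
  | mul g h _ _ hg hh => rw [map_mul]; exact Module.End.invtSubmodule.comp _ hg hh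
  | inv g _ hg => exact ρ.mem_invtSubmodule_inv hg

end Group

namespace IsIrreducible

variable [Monoid G] {ρ : Representation k G V} [ρ.IsIrreducible]

lemma eq_top_of_mem_invtSubmodule {p : Submodule k V} (hp : p ∈ ρ.invtSubmodule)
    (hbot : p ≠ ⊥) : p = ⊤ := by
  let σ : Subrepresentation ρ := ⟨p, fun g ↦ ρ.mem_invtSubmodule.mp hp g⟩
  have hσ : σ ≠ ⊥ := fun h ↦ hbot (congrArg Subrepresentation.toSubmodule h)
  exact congrArg Subrepresentation.toSubmodule ((eq_bot_or_eq_top σ).resolve_left hσ)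

lemma exists_eq_smul_one [FiniteDimensional k V] [IsAlgClosed k] (f : Module.End k V)
    (hf : ∀ g, Commute f (ρ g)) : ∃ c : k, f = c • 1 := by
  obtain ⟨c, hc⟩ := algebraMap_intertwiningMap_bijective_of_isAlgClosed.2
    (f.intertwiningMap_of_isIntertwiningMap ρ ρ fun g v ↦ congrArg (· v) (hf g))
  exact ⟨c, (congrArg IntertwiningMap.toLinearMap hc).symm⟩

end IsIrreducible

end Representation

namespace FDRep

universe u v

variable {k : Type u} {G : Type v} [Field k] [Monoid G]

instance nontrivial_of_simple (V : FDRep k G) [Simple V] : Nontrivial V := by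
  by_contra h
  rw [not_nontrivial_iff_subsingleton] at h
  exact id_nonzero V (Action.Hom.ext (FGModuleCat.hom_ext (LinearMap.ext fun _ ↦
    Subsingleton.elim _ _)))

instance isIrreducible_ρ (V : FDRep k G) [Simple V] : Representation.IsIrreducible V.ρ where
  exists_pair_ne := ⟨⊥, ⊤, fun h ↦ bot_ne_top (congrArg Subrepresentation.toSubmodule h)⟩
  eq_bot_or_eq_top σ := by
    let ι : FDRep.of σ.toRepresentation ⟶ V :=
      ⟨ObjectProperty.homMk (ModuleCat.ofHom σ.toSubmodule.subtype), fun _ ↦ rfl⟩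
    have : Mono ι := ⟨fun f g h ↦ by ext z; exact congrArg (fun φ ↦ φ.hom z) h⟩
    by_cases h0 : ι = 0
    · refine Or.inl (Subrepresentation.ext ((Submodule.eq_bot_iff _).mpr fun v hv ↦ ?_))
      exact congrArg (fun φ ↦ φ.hom ⟨v, hv⟩) h0
    · have : IsIso ι := isIso_of_mono_of_nonzero h0
      refine Or.inr (Subrepresentation.ext (Submodule.eq_top_iff'.mpr fun v ↦ ?_))
      have hv : ι.hom ((inv ι).hom v) = v := congrArg (fun φ ↦ φ.hom v) (IsIso.inv_hom_id ι)
      exact hv ▸ ((inv ι).hom v).2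

lemma finrank_hom_le_finrank_eigenspace {W V : FDRep k G} {w : W}
    (hw : Submodule.span k {w} = ⊤) {x : G} {μ : k} (hx : W.ρ x w = μ • w) :
    finrank k (W ⟶ V) ≤ finrank k (Module.End.eigenspace (V.ρ x) μ) := by
  let ev : (W ⟶ V) →ₗ[k] Module.End.eigenspace (V.ρ x) μ :=
    { toFun f := ⟨f.hom w, by
        rw [Module.End.mem_eigenspace_iff, ← map_smul, ← hx]
        exact (ConcreteCategory.congr_hom (f.comm x) w).symm⟩
      map_add' _ _ := rfl
      map_smul' _ _ := rfl }
  refine LinearMap.finrank_le_finrank_of_injective (f := ev) fun f g hfg ↦ ?_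
  exact Action.Hom.ext (FGModuleCat.hom_ext (LinearMap.ext_on hw (by
    rintro _ rfl; exact congrArg Subtype.val hfg)))

end FDRep

namespace QuaternionGroup

variable {n : ℕ}

lemma a_one_zpow (k : ℤ) : (a 1 : QuaternionGroup n) ^ k = a k := by
  cases k with
  | ofNat m => simp [a_one_pow]
  | negSucc m =>
    rw [zpow_negSucc, a_one_pow, inv_eq_iff_mul_eq_one, a_mul_a, ← a_zero, Int.cast_negSucc]
    push_cast
    ring_nf

lemma closure_a_one_xa (i : ZMod (2 * n)) : Subgroup.closure {a 1, xa i} = ⊤ := by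
  have ha : ∀ j, a j ∈ Subgroup.closure {(a 1 : QuaternionGroup n), xa i} := fun j ↦ by
    rw [← ZMod.intCast_zmod_cast j, ← a_one_zpow]
    exact zpow_mem (Subgroup.subset_closure (by simp)) _
  refine eq_top_iff.mpr fun g _ ↦ ?_
  cases g with
  | a j => exact ha j
  | xa j =>
    rw [show xa j = xa i * a (j - i) by rw [xa_mul_a, add_sub_cancel]]
    exact mul_mem (Subgroup.subset_closure (by simp)) (ha _)

variable {k V : Type*} [Field k] [AddCommGroup V] [Module k V]
  (ρ : Representation k (QuaternionGroup n) V)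

lemma commute_a_one_add_a_neg_one (g : QuaternionGroup n) :
    Commute (ρ (a 1) + ρ (a (-1))) (ρ g) := by
  cases g with
  | a j =>
    simp only [Commute, SemiconjBy, add_mul, mul_add, ← map_mul, a_mul_a, add_comm j]
  | xa j =>
    simp only [Commute, SemiconjBy, add_mul, mul_add, ← map_mul, a_mul_xa, xa_mul_a,
      sub_eq_add_neg, neg_neg]
    exact add_comm _ _

lemma xa_a_one_apply (i : ZMod (2 * n)) (v : V) :
    ρ (xa i) (ρ (a 1) v) = ρ (a (-1)) (ρ (xa i) v) := by
  simp only [← Module.End.mul_apply, ← map_mul, xa_mul_a, a_mul_xa, sub_neg_eq_add]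

section Scalar

variable {ρ} {t : k} (ht : ρ (a 1) + ρ (a (-1)) = t • 1)
include ht

lemma a_neg_one_apply (v : V) : ρ (a (-1)) v = t • v - ρ (a 1) v := by
  rw [eq_sub_iff_add_eq', ← LinearMap.add_apply, ht]
  rfl

lemma a_one_a_one_apply (v : V) : ρ (a 1) (ρ (a 1) v) = t • ρ (a 1) v - v := by
  have h : ρ (a (-1)) (ρ (a 1) v) = v := ρ.inv_self_apply (a 1) v
  rw [a_neg_one_apply ht] at h
  linear_combination (norm := module) -h

variable {i : ZMod (2 * n)} {μ : k} {u : V} (hu : ρ (xa i) u = μ • u)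
include hu

lemma span_pair_a_one_eq_top [ρ.IsIrreducible] [FiniteDimensional k V] (hu0 : u ≠ 0) :
    Submodule.span k {u, ρ (a 1) u} = ⊤ := by
  set p := Submodule.span k {u, ρ (a 1) u}
  have hmem : ∀ f : Module.End k V, f u ∈ p → f (ρ (a 1) u) ∈ p →
      p ∈ Module.End.invtSubmodule f := fun f h₁ h₂ ↦
    Submodule.span_le.mpr (Set.insert_subset_iff.mpr ⟨h₁, Set.singleton_subset_iff.mpr h₂⟩)
  refine Representation.IsIrreducible.eq_top_of_mem_invtSubmodule
    (ρ.mem_invtSubmodule_of_closure_eq_top (closure_a_one_xa i) ?_) ?_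
  · simp only [Set.mem_insert_iff, Set.mem_singleton_iff, forall_eq_or_imp, forall_eq]
    refine ⟨hmem _ (Submodule.mem_span_pair.mpr ⟨0, 1, by simp⟩) ?_,
      hmem _ (Submodule.mem_span_pair.mpr ⟨μ, 0, by simp [hu]⟩) ?_⟩
    · rw [a_one_a_one_apply ht]
      exact Submodule.mem_span_pair.mpr ⟨-1, t, by module⟩
    · rw [xa_a_one_apply, hu, map_smul, a_neg_one_apply ht]
      exact Submodule.mem_span_pair.mpr ⟨μ * t, -μ, by module⟩
  · exact fun h ↦ hu0 (Submodule.span_eq_bot.mp h u (by simp))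

lemma eigenspace_xa_le_span_singleton [NeZero (2 : k)]
    (hspan : Submodule.span k {u, ρ (a 1) u} = ⊤) (hμ : μ ≠ 0) :
    Module.End.eigenspace (ρ (xa i)) μ ≤ Submodule.span k {u} := by
  intro v hv
  obtain ⟨c, d, hcd⟩ := Submodule.mem_span_pair.mp (hspan ▸ Submodule.mem_top : v ∈ _)
  have hv' : v = c • u + d • (t • u - ρ (a 1) u) := by
    apply smul_right_injective V hμ
    show μ • v = μ • _
    rw [← Module.End.mem_eigenspace_iff.mp hv, ← hcd, map_add, map_smul, map_smul, hu,
      xa_a_one_apply, hu, map_smul, a_neg_one_apply ht]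
    module
  have h2 : (2 : k) • v = (2 * c + d * t) • u := by
    linear_combination (norm := module) hv' - hcd
  refine Submodule.mem_span_singleton.mpr ⟨(2 : k)⁻¹ * (2 * c + d * t), ?_⟩
  rw [mul_smul, ← h2, inv_smul_smul₀ two_ne_zero]

end Scalar

lemma finrank_eigenspace_xa_le_one [ρ.IsIrreducible] [FiniteDimensional k V] [IsAlgClosed k]
    [NeZero (2 : k)] (i : ZMod (2 * n)) (μ : k) :
    finrank k (Module.End.eigenspace (ρ (xa i)) μ) ≤ 1 := by
  obtain ⟨t, ht⟩ := Representation.IsIrreducible.exists_eq_smul_one _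
    (commute_a_one_add_a_neg_one ρ)
  rcases eq_or_ne (Module.End.eigenspace (ρ (xa i)) μ) ⊥ with hE | hE
  · rw [hE, finrank_bot]; exact zero_le_one
  obtain ⟨u, hu, hu0⟩ := Submodule.exists_mem_ne_zero_of_ne_bot hE
  replace hu := Module.End.mem_eigenspace_iff.mp hu
  have hμ : μ ≠ 0 := by
    rintro rfl
    exact hu0 (by simpa [hu] using (ρ.inv_self_apply (xa i) u).symm)
  calc finrank k (Module.End.eigenspace (ρ (xa i)) μ)
      ≤ finrank k (Submodule.span k {u}) := Submodule.finrank_mono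
        (eigenspace_xa_le_span_singleton ht hu (span_pair_a_one_eq_top ht hu hu0) hμ)
    _ = 1 := finrank_span_singleton hu0

end QuaternionGroup

theorem isStrongGelfandPair_dicyclic_xa_general (n : ℕ) (i : ZMod (2 * n)) :
    IsStrongGelfandPair (QuaternionGroup n)
      (Subgroup.zpowers (QuaternionGroup.xa i)) := by
  intro V W _ _
  let x : Subgroup.zpowers (QuaternionGroup.xa i) := ⟨_, Subgroup.mem_zpowers _⟩
  have hW : finrank ℂ W = 1 :=
    Representation.IsIrreducible.finrank_eq_one_of_isMulCommutative W.ρ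
  obtain ⟨w, hw⟩ := exists_ne (0 : W)
  obtain ⟨μ, hμ⟩ := (finrank_eq_one_iff_of_nonzero' w hw).mp hW (W.ρ x w)
  calc finrank ℂ (W ⟶ _)
      ≤ finrank ℂ (Module.End.eigenspace (V.ρ (QuaternionGroup.xa i)) μ) :=
        FDRep.finrank_hom_le_finrank_eigenspace ((finrank_eq_one_iff_of_nonzero w hw).mp hW)
          hμ.symm
    _ ≤ 1 := QuaternionGroup.finrank_eigenspace_xa_le_one V.ρ i μ

/-- For every `n ≥ 2` and every `i`, the pair `(Dic_{4n}, ⟨b a^i⟩)` is a strong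
Gelfand pair, where `b a^i` is the order-four element `xa i`. -/
theorem isStrongGelfandPair_dicyclic_xa (n : ℕ) (hn : 2 ≤ n) (i : ZMod (2 * n)) :
    IsStrongGelfandPair (QuaternionGroup n)
      (Subgroup.zpowers (QuaternionGroup.xa i)) :=
  isStrongGelfandPair_dicyclic_xa_general n i
end
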